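/- Let K > 0. There exists a constant C > 0, depending only on K, with the following property. Let L > 0, let γ : ℝ → ℝ be twice continuously differentiable and L-periodic with |γ'(x)| ≤ 1/2 and |γ''(x)| ≤ K for all x, let c ∈ ℝ, and set A(x) = x - γ(x) - c. Then for every twice continuously differentiable L-periodic f : ℝ → ℂ: ‖f∘A⁻¹‖²_{H²(0,L)} ≤ C ‖f‖²_{H²(0,L)}. -/

import Mathlib

/-- The `H²`-norm over one period `(0, L)`. -/
noncomputable def H2norm {E : Type*} [NormedAddCommGroup E] [NormedSpace ℝ E]
    (L : ℝ) (f : ℝ → E) : ℝ :=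
  Real.sqrt ((∫ x in (0:ℝ)..L, ‖f x‖ ^ 2) + (∫ x in (0:ℝ)..L, ‖deriv f x‖ ^ 2)
    + ∫ x in (0:ℝ)..L, ‖deriv (deriv f) x‖ ^ 2)

/-!
With `g = A⁻¹` one has `(f ∘ g)' = g' • f' ∘ g` and `(f ∘ g)'' = g'² • f'' ∘ g + g'' • f' ∘ g`,
where `g' = 1 / A' ∘ g` and `g'' = -A'' ∘ g / (A' ∘ g)³` are bounded by `2` and `8K` since
`A' = 1 - γ' ≥ 1/2`. Every term of `‖f ∘ g‖²_{H²}` is thus bounded by integrals `∫₀ᴸ h ∘ g` with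
`h ≥ 0` periodic, and the substitution `x = g y`, which maps a period onto a period because
`A (x + L) = A x + L`, turns these into `∫ h · A' ≤ 3/2 ∫₀ᴸ h`.
-/

open Function Filter

theorem Function.Periodic.deriv {E : Type*} [NormedAddCommGroup E] [NormedSpace ℝ E]
    {f : ℝ → E} {L : ℝ} (hf : Periodic f L) : Periodic (deriv f) L := fun x => by
  rw [← deriv_comp_add_const, hf.funext]

theorem abs_inv_le_of_le {m t : ℝ} (hm : 0 < m) (ht : m ≤ t) : |t⁻¹| ≤ m⁻¹ := by
  rw [abs_inv, abs_of_pos (hm.trans_le ht)]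
  exact inv_anti₀ hm ht

theorem abs_div_pow_le {m t s K : ℝ} (n : ℕ) (hm : 0 < m) (ht : m ≤ t) (hs : |s| ≤ K) :
    |s / t ^ n| ≤ K / m ^ n := by
  rw [abs_div, abs_pow, abs_of_pos (hm.trans_le ht)]
  exact div_le_div₀ ((abs_nonneg s).trans hs) hs (by positivity) (pow_le_pow_left₀ hm.le ht n)

section InverseOfExpandingMap

variable {A A' : ℝ → ℝ} {m : ℝ}

theorem surjective_of_hasDerivAt_ge (hm : 0 < m) (hA : ∀ x, HasDerivAt A (A' x) x)
    (hA'm : ∀ x, m ≤ A' x) : Surjective A := by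
  have hdiff : Differentiable ℝ A := fun x => (hA x).differentiableAt
  have grow : ∀ ⦃x y⦄, x ≤ y → m * (y - x) ≤ A y - A x :=
    mul_sub_le_image_sub_of_le_deriv hdiff fun x => (hA x).deriv ▸ hA'm x
  refine hdiff.continuous.surjective ?_ ?_
  · refine tendsto_atTop_atTop.2 fun b => ⟨max 0 ((b - A 0) / m), fun x hx => ?_⟩
    have hb : b - A 0 ≤ x * m := (div_le_iff₀ hm).1 (le_of_max_le_right hx)
    linarith [grow (le_of_max_le_left hx)]
  · refine tendsto_atBot_atBot.2 fun b => ⟨min 0 ((b - A 0) / m), fun x hx => ?_⟩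
    have hb : x * m ≤ b - A 0 := (le_div_iff₀ hm).1 (le_of_le_min_right hx)
    linarith [grow (le_of_le_min_left hx)]

theorem continuous_invFun_of_strictMono (hA : StrictMono A) (hs : Surjective A) :
    Continuous (invFun A) := by
  convert (hA.orderIsoOfSurjective A hs).symm.continuous
  funext y
  apply hA.injective
  rw [rightInverse_invFun hs]
  exact ((hA.orderIsoOfSurjective A hs).apply_symm_apply y).symm

theorem continuous_invFun_of_hasDerivAt_ge (hm : 0 < m) (hA : ∀ x, HasDerivAt A (A' x) x)
    (hA'm : ∀ x, m ≤ A' x) : Continuous (invFun A) :=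
  continuous_invFun_of_strictMono (strictMono_of_hasDerivAt_pos hA fun x => hm.trans_le (hA'm x))
    (surjective_of_hasDerivAt_ge hm hA hA'm)

theorem hasDerivAt_invFun_of_hasDerivAt_ge (hm : 0 < m) (hA : ∀ x, HasDerivAt A (A' x) x)
    (hA'm : ∀ x, m ≤ A' x) (y : ℝ) :
    HasDerivAt (invFun A) (A' (invFun A y))⁻¹ y :=
  (hA _).of_local_left_inverse (continuous_invFun_of_hasDerivAt_ge hm hA hA'm).continuousAt
    (hm.trans_le (hA'm _)).ne'
    (Eventually.of_forall (rightInverse_invFun (surjective_of_hasDerivAt_ge hm hA hA'm)))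

theorem hasDerivAt_inv_comp_invFun_of_hasDerivAt_ge {A'' : ℝ → ℝ} (hm : 0 < m)
    (hA : ∀ x, HasDerivAt A (A' x) x) (hA'm : ∀ x, m ≤ A' x)
    (hA' : ∀ x, HasDerivAt A' (A'' x) x) (y : ℝ) :
    HasDerivAt (fun y => (A' (invFun A y))⁻¹) (-A'' (invFun A y) / A' (invFun A y) ^ 3) y := by
  have hne : A' (invFun A y) ≠ 0 := (hm.trans_le (hA'm _)).ne'
  have hA'g : HasDerivAt (fun y => A' (invFun A y))
      (A'' (invFun A y) * (A' (invFun A y))⁻¹) y :=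
    (hA' _).comp y (hasDerivAt_invFun_of_hasDerivAt_ge hm hA hA'm y)
  exact (hA'g.inv hne).congr_deriv (by field_simp)

theorem integral_comp_invFun_le {L M : ℝ} {h : ℝ → ℝ} (hm : 0 < m)
    (hA : ∀ x, HasDerivAt A (A' x) x) (hA'm : ∀ x, m ≤ A' x) (hA'c : Continuous A')
    (hA'M : ∀ x, A' x ≤ M) (hAL : ∀ x, A (x + L) = A x + L) (hL : 0 ≤ L) (hh : Continuous h)
    (hh0 : ∀ x, 0 ≤ h x) (hhL : Periodic h L) :
    ∫ y in (0:ℝ)..L, h (invFun A y) ≤ M * ∫ x in (0:ℝ)..L, h x := by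
  have hs := surjective_of_hasDerivAt_ge hm hA hA'm
  have hinj := (strictMono_of_hasDerivAt_pos hA fun x => hm.trans_le (hA'm x)).injective
  set x₀ := invFun A 0
  have hx₀ : A x₀ = 0 := rightInverse_invFun hs 0
  have hx₀L : A (x₀ + L) = L := by rw [hAL, hx₀, zero_add]
  calc ∫ y in (0:ℝ)..L, h (invFun A y)
      = ∫ x in x₀..x₀ + L, ((h ∘ invFun A) ∘ A) x * A' x := by
        rw [intervalIntegral.integral_comp_mul_deriv (fun x _ => hA x) hA'c.continuousOn
          (hh.comp (continuous_invFun_of_hasDerivAt_ge hm hA hA'm)), hx₀, hx₀L]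
        rfl
    _ = ∫ x in x₀..x₀ + L, h x * A' x := by
        simp only [comp_apply, leftInverse_invFun hinj _]
    _ ≤ ∫ x in x₀..x₀ + L, M * h x :=
        intervalIntegral.integral_mono_on (by linarith) ((hh.mul hA'c).intervalIntegrable _ _)
          ((continuous_const.mul hh).intervalIntegrable _ _)
          fun x _ => by nlinarith [hh0 x, hA'M x]
    _ = M * ∫ x in (0:ℝ)..L, h x := by
        rw [intervalIntegral.integral_const_mul, hhL.intervalIntegral_add_eq x₀ 0, zero_add]

end InverseOfExpandingMap

section CompositionH2

variable {E : Type*} [NormedAddCommGroup E] [NormedSpace ℝ E] {f : ℝ → E} {g g' g'' : ℝ → ℝ}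

theorem H2norm_sq {L : ℝ} (hL : 0 ≤ L) (f : ℝ → E) :
    H2norm L f ^ 2 = (∫ x in (0:ℝ)..L, ‖f x‖ ^ 2) + (∫ x in (0:ℝ)..L, ‖deriv f x‖ ^ 2)
      + ∫ x in (0:ℝ)..L, ‖deriv (deriv f) x‖ ^ 2 := by
  have hnn (u : ℝ → E) : 0 ≤ ∫ x in (0:ℝ)..L, ‖u x‖ ^ 2 :=
    intervalIntegral.integral_nonneg hL fun x _ => by positivity
  rw [H2norm, Real.sq_sqrt (by linarith [hnn f, hnn (deriv f), hnn (deriv (deriv f))])]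

theorem deriv_comp_eq_smul (hf : Differentiable ℝ f) (hg : ∀ y, HasDerivAt g (g' y) y) :
    deriv (f ∘ g) = fun y => g' y • deriv f (g y) :=
  funext fun y => ((hf (g y)).hasDerivAt.scomp y (hg y)).deriv

theorem deriv_deriv_comp_eq (hf : Differentiable ℝ f) (hf' : Differentiable ℝ (deriv f))
    (hg : ∀ y, HasDerivAt g (g' y) y) (hg' : ∀ y, HasDerivAt g' (g'' y) y) :
    deriv (deriv (f ∘ g)) =
      fun y => g' y ^ 2 • deriv (deriv f) (g y) + g'' y • deriv f (g y) := by
  rw [deriv_comp_eq_smul hf hg]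
  funext y
  refine ((hg' y).smul ((hf' (g y)).hasDerivAt.scomp y (hg y))).deriv.trans ?_
  rw [smul_smul, sq]
  rfl

theorem norm_smul_sq_le {s a : ℝ} (hs : |s| ≤ a) (v : E) : ‖s • v‖ ^ 2 ≤ a ^ 2 * ‖v‖ ^ 2 := by
  rw [norm_smul, mul_pow, Real.norm_eq_abs]
  exact mul_le_mul_of_nonneg_right (pow_le_pow_left₀ (abs_nonneg s) hs 2) (by positivity)

theorem norm_smul_add_smul_sq_le {s t a b : ℝ} (hs : |s| ≤ a) (ht : |t| ≤ b) (v w : E) :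
    ‖s • v + t • w‖ ^ 2 ≤ 2 * a ^ 2 * ‖v‖ ^ 2 + 2 * b ^ 2 * ‖w‖ ^ 2 := by
  have hsv : ‖s • v‖ ≤ a * ‖v‖ := by
    rw [norm_smul, Real.norm_eq_abs]; exact mul_le_mul_of_nonneg_right hs (norm_nonneg v)
  have htw : ‖t • w‖ ≤ b * ‖w‖ := by
    rw [norm_smul, Real.norm_eq_abs]; exact mul_le_mul_of_nonneg_right ht (norm_nonneg w)
  calc ‖s • v + t • w‖ ^ 2 ≤ (a * ‖v‖ + b * ‖w‖) ^ 2 :=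
        pow_le_pow_left₀ (norm_nonneg _) ((norm_add_le _ _).trans (add_le_add hsv htw)) 2
    _ ≤ 2 * a ^ 2 * ‖v‖ ^ 2 + 2 * b ^ 2 * ‖w‖ ^ 2 := by
        nlinarith [sq_nonneg (a * ‖v‖ - b * ‖w‖)]

theorem integral_norm_sq_deriv_comp_le {L a : ℝ} (hL : 0 ≤ L) (hf : Differentiable ℝ f)
    (hf'c : Continuous (deriv f)) (hg : ∀ y, HasDerivAt g (g' y) y) (hg'c : Continuous g')
    (hg'a : ∀ y, |g' y| ≤ a) :
    ∫ y in (0:ℝ)..L, ‖deriv (f ∘ g) y‖ ^ 2 ≤ a ^ 2 * ∫ y in (0:ℝ)..L, ‖deriv f (g y)‖ ^ 2 := by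
  have hgc : Continuous g := continuous_iff_continuousAt.2 fun y => (hg y).continuousAt
  rw [deriv_comp_eq_smul hf hg, ← intervalIntegral.integral_const_mul]
  exact intervalIntegral.integral_mono_on hL (Continuous.intervalIntegrable (by fun_prop) _ _)
    (Continuous.intervalIntegrable (by fun_prop) _ _) fun y _ => norm_smul_sq_le (hg'a y) _

theorem integral_norm_sq_deriv_deriv_comp_le {L a b : ℝ} (hL : 0 ≤ L) (hf : Differentiable ℝ f)
    (hf' : Differentiable ℝ (deriv f)) (hf''c : Continuous (deriv (deriv f)))
    (hg : ∀ y, HasDerivAt g (g' y) y) (hg' : ∀ y, HasDerivAt g' (g'' y) y)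
    (hg''c : Continuous g'') (hg'a : ∀ y, |g' y| ≤ a) (hg''b : ∀ y, |g'' y| ≤ b) :
    ∫ y in (0:ℝ)..L, ‖deriv (deriv (f ∘ g)) y‖ ^ 2
      ≤ 2 * (a ^ 2) ^ 2 * (∫ y in (0:ℝ)..L, ‖deriv (deriv f) (g y)‖ ^ 2)
        + 2 * b ^ 2 * ∫ y in (0:ℝ)..L, ‖deriv f (g y)‖ ^ 2 := by
  have hgc : Continuous g := continuous_iff_continuousAt.2 fun y => (hg y).continuousAt
  have hg'c : Continuous g' := continuous_iff_continuousAt.2 fun y => (hg' y).continuousAt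
  have hf'c : Continuous (deriv f) := hf'.continuous
  have hg'a2 (y : ℝ) : |g' y ^ 2| ≤ a ^ 2 := by
    rw [abs_pow]
    exact pow_le_pow_left₀ (abs_nonneg _) (hg'a y) 2
  rw [deriv_deriv_comp_eq hf hf' hg hg', ← intervalIntegral.integral_const_mul,
    ← intervalIntegral.integral_const_mul,
    ← intervalIntegral.integral_add (Continuous.intervalIntegrable (by fun_prop) _ _)
      (Continuous.intervalIntegrable (by fun_prop) _ _)]
  exact intervalIntegral.integral_mono_on hL (Continuous.intervalIntegrable (by fun_prop) _ _)
    (Continuous.intervalIntegrable (by fun_prop) _ _)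
    fun y _ => norm_smul_add_smul_sq_le (hg'a2 y) (hg''b y) _ _

theorem H2norm_sq_comp_le {L M a b : ℝ} (hL : 0 ≤ L) (hM : 0 ≤ M) (hf : ContDiff ℝ 2 f)
    (hfL : Periodic f L) (hg : ∀ y, HasDerivAt g (g' y) y) (hg' : ∀ y, HasDerivAt g' (g'' y) y)
    (hg''c : Continuous g'') (hg'a : ∀ y, |g' y| ≤ a) (hg''b : ∀ y, |g'' y| ≤ b)
    (hsubst : ∀ h : ℝ → ℝ, Continuous h → (∀ x, 0 ≤ h x) → Periodic h L →
      ∫ y in (0:ℝ)..L, h (g y) ≤ M * ∫ x in (0:ℝ)..L, h x) :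
    H2norm L (f ∘ g) ^ 2 ≤ M * (1 + a ^ 2 + 2 * a ^ 4 + 2 * b ^ 2) * H2norm L f ^ 2 := by
  have hf1 : Differentiable ℝ f := hf.differentiable two_ne_zero
  have hf2 : ContDiff ℝ 1 (deriv f) := hf.deriv' (n := 1)
  have hf2d : Differentiable ℝ (deriv f) := hf2.differentiable one_ne_zero
  have hg'c : Continuous g' := continuous_iff_continuousAt.2 fun y => (hg' y).continuousAt
  have hnn (u : ℝ → E) : 0 ≤ ∫ x in (0:ℝ)..L, ‖u x‖ ^ 2 :=
    intervalIntegral.integral_nonneg hL fun x _ => by positivity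
  have hJ (u : ℝ → E) (hu : Continuous u) (huL : Periodic u L) :
      ∫ y in (0:ℝ)..L, ‖u (g y)‖ ^ 2 ≤ M * ∫ x in (0:ℝ)..L, ‖u x‖ ^ 2 :=
    hsubst (fun x => ‖u x‖ ^ 2) (hu.norm.pow 2) (fun _ => by positivity)
      fun x => by simp only [huL x]
  have hJ0 := hJ f hf1.continuous hfL
  have hJ1 := hJ (deriv f) hf2d.continuous hfL.deriv
  have hJ2 := hJ (deriv (deriv f)) (hf2.continuous_deriv le_rfl) hfL.deriv.deriv
  have hD1 := integral_norm_sq_deriv_comp_le hL hf1 hf2d.continuous hg hg'c hg'a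
  have hD2 := integral_norm_sq_deriv_deriv_comp_le hL hf1 hf2d (hf2.continuous_deriv le_rfl)
    hg hg' hg''c hg'a hg''b
  rw [H2norm_sq hL, H2norm_sq hL]
  simp only [comp_apply]
  linarith [mul_le_mul_of_nonneg_left hJ1 (sq_nonneg a),
    mul_le_mul_of_nonneg_left hJ2 (by positivity : (0:ℝ) ≤ 2 * (a ^ 2) ^ 2),
    mul_le_mul_of_nonneg_left hJ1 (by positivity : (0:ℝ) ≤ 2 * b ^ 2),
    mul_nonneg (mul_nonneg hM (by positivity : (0:ℝ) ≤ a ^ 2 + 2 * a ^ 4 + 2 * b ^ 2)) (hnn f),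
    mul_nonneg (mul_nonneg hM (by positivity : (0:ℝ) ≤ 1 + 2 * a ^ 4)) (hnn (deriv f)),
    mul_nonneg (mul_nonneg hM (by positivity : (0:ℝ) ≤ 1 + a ^ 2 + 2 * b ^ 2))
      (hnn (deriv (deriv f)))]

end CompositionH2

theorem composition_inverse_H2_bound_general (K : ℝ) :
    ∃ C : ℝ, 0 < C ∧
      ∀ L : ℝ, 0 < L →
      ∀ γ : ℝ → ℝ, ContDiff ℝ 2 γ → Function.Periodic γ L →
      (∀ x : ℝ, |deriv γ x| ≤ 1 / 2) → (∀ x : ℝ, |deriv (deriv γ) x| ≤ K) →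
      ∀ (c : ℝ) (A : ℝ → ℝ), (∀ x : ℝ, A x = x - γ x - c) →
      ∀ f : ℝ → ℂ, ContDiff ℝ 2 f → Function.Periodic f L →
      H2norm L (f ∘ Function.invFun A) ^ 2 ≤ C * H2norm L f ^ 2 := by
  refine ⟨3 / 2 * (1 + 2 ^ 2 + 2 * 2 ^ 4 + 2 * (K / (1 / 2) ^ 3) ^ 2), by positivity, ?_⟩
  intro L hL γ hγ hγL hγ' hγ'' c A hA f hf hfL
  have hγ1 : ContDiff ℝ 1 (deriv γ) := hγ.deriv' (n := 1)
  have hAd (x : ℝ) : HasDerivAt A (1 - deriv γ x) x := by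
    rw [funext hA]
    exact ((hasDerivAt_id x).sub (hγ.differentiable two_ne_zero x).hasDerivAt).sub_const c
  have hA'd (x : ℝ) : HasDerivAt (fun x => 1 - deriv γ x) (-deriv (deriv γ) x) x :=
    (hγ1.differentiable one_ne_zero x).hasDerivAt.const_sub 1
  have hA'm (x : ℝ) : 1 / 2 ≤ 1 - deriv γ x := by linarith [(abs_le.1 (hγ' x)).2]
  have hA'M (x : ℝ) : 1 - deriv γ x ≤ 3 / 2 := by linarith [(abs_le.1 (hγ' x)).1]
  have hAL (x : ℝ) : A (x + L) = A x + L := by rw [hA, hA, hγL]; ring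
  have hgc := continuous_invFun_of_hasDerivAt_ge one_half_pos hAd hA'm
  have hA'c : Continuous fun x => 1 - deriv γ x := continuous_const.sub hγ1.continuous
  refine H2norm_sq_comp_le hL.le (by norm_num) hf hfL
    (hasDerivAt_invFun_of_hasDerivAt_ge one_half_pos hAd hA'm)
    (hasDerivAt_inv_comp_invFun_of_hasDerivAt_ge one_half_pos hAd hA'm hA'd)
    (by fun_prop (disch := exact fun y => pow_ne_zero 3 (one_half_pos.trans_le (hA'm _)).ne'))
    (fun y => ?_) (fun y => ?_)
    fun h hh hh0 hhL =>
      integral_comp_invFun_le one_half_pos hAd hA'm hA'c hA'M hAL hL.le hh hh0 hhL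
  · simpa using abs_inv_le_of_le one_half_pos (hA'm (invFun A y))
  · exact abs_div_pow_le 3 one_half_pos (hA'm _) (by rw [neg_neg]; exact hγ'' _)

/-- For every `K > 0` there is a constant `C > 0`, depending only on
`K`, such that for every `L > 0`, every `L`-periodic `C²` modulation `γ` with
`|γ'| ≤ 1/2` and `|γ''| ≤ K`, every `c ∈ ℝ` and `A(x) = x - γ(x) - c`, and every
`L`-periodic `C²` function `f`: `‖f∘A⁻¹‖²_{H²(0,L)} ≤ C‖f‖²_{H²(0,L)}`. -/
theorem composition_inverse_H2_bound (K : ℝ) (hK : 0 < K) :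
    ∃ C : ℝ, 0 < C ∧
      ∀ L : ℝ, 0 < L →
      ∀ γ : ℝ → ℝ, ContDiff ℝ 2 γ → Function.Periodic γ L →
      (∀ x : ℝ, |deriv γ x| ≤ 1 / 2) → (∀ x : ℝ, |deriv (deriv γ) x| ≤ K) →
      ∀ (c : ℝ) (A : ℝ → ℝ), (∀ x : ℝ, A x = x - γ x - c) →
      ∀ f : ℝ → ℂ, ContDiff ℝ 2 f → Function.Periodic f L →
      H2norm L (f ∘ Function.invFun A) ^ 2 ≤ C * H2norm L f ^ 2 :=
  composition_inverse_H2_bound_general K
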